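/- For all t ∈ (0, π/2): (2 + cos t)/3 < (2s + (s+3)cos t)/((3s+1) + 2cos t) for every s ≤ -1. -/
import Mathlib

theorem stmt12 (t : ℝ) (ht : t ∈ Set.Ioo 0 (Real.pi/2)) (s : ℝ) (hs : s ≤ -1) :
    (2 + Real.cos t)/3 < (2*s + (s+3)*Real.cos t) / ((3*s+1) + 2*Real.cos t) := by
  obtain ⟨h0, h1⟩ := ht
  have hc0 : 0 < Real.cos t := Real.cos_pos_of_mem_Ioo ⟨by linarith [Real.pi_pos], h1⟩
  have hc1 : Real.cos t < 1 := by
    have := Real.cos_lt_cos_of_nonneg_of_le_pi le_rfl (by linarith [Real.pi_pos]) h0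
    simpa using this
  have hD : (3*s+1) + 2*Real.cos t < 0 := by linarith
  rw [lt_div_iff_of_neg hD]
  nlinarith [sq_nonneg (Real.cos t - 1)]
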